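/- arXiv:2208.14644 — 2 statements merged into one kernel-verified Lean document; each statement's English description precedes it below -/
import Mathlib

section
/- If f is in the class S*_ρ of starlike functions associated with the petal-shaped domain, with Taylor expansion f(z) = z + Σ_{n≥2} a_n z^n, then |a_3| ≤ 1/2. -/
open Metric

/-- Principal branch of the complex inverse hyperbolic sine:
`arcsinh ζ = log (ζ + (1 + ζ²)^(1/2))`. -/
noncomputable def carcsinh (ζ : ℂ) : ℂ :=
  Complex.log (ζ + (1 + ζ ^ 2) ^ ((1 : ℂ) / 2))

/-- `f` belongs to the class `S*_ρ` of starlike functions associated with the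
petal-shaped domain: `f` is analytic on the unit disk with `f 0 = 0`,
`f' 0 = 1`, and there is a Schwarz function `w` with
`z f'(z) = f(z) (1 + arcsinh (w z))` on the unit disk. -/
def InStarRho (f : ℂ → ℂ) : Prop :=
  AnalyticOnNhd ℂ f (ball (0 : ℂ) 1) ∧ f 0 = 0 ∧ deriv f 0 = 1 ∧
    ∃ w : ℂ → ℂ, AnalyticOnNhd ℂ w (ball (0 : ℂ) 1) ∧ w 0 = 0 ∧
      (∀ z ∈ ball (0 : ℂ) 1, ‖w z‖ ≤ ‖z‖) ∧
      ∀ z ∈ ball (0 : ℂ) 1, z * deriv f z = f z * (1 + carcsinh (w z))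

/-! Write the Schwarz function as `w z = c₁ z + c₂ z² + ⋯`. Since `arcsinh ζ = ζ + O(ζ³)`,
differentiating `z f' = f (1 + arcsinh ∘ w)` three times at the origin gives
`a₃ = (c₁² + c₂) / 2`. The Schwarz–Pick inequality at the origin, applied to `w z / z`, gives
`|c₂| ≤ 1 - |c₁|²`, hence `|a₃| ≤ (|c₁|² + 1 - |c₁|²) / 2 = 1 / 2`. -/

open Filter Topology Set Complex ComplexConjugate

section Calculus

variable {𝕜 : Type*} [NontriviallyNormedField 𝕜]

theorem iteratedDeriv_two {F : Type*} [NormedAddCommGroup F] [NormedSpace 𝕜 F] (f : 𝕜 → F) :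
    iteratedDeriv 2 f = deriv (deriv f) := by
  rw [iteratedDeriv_succ', iteratedDeriv_one]

theorem iteratedDeriv_succ_id_mul_zero {n : ℕ} {g : 𝕜 → 𝕜} (hg : ContDiffAt 𝕜 (n + 1) g 0) :
    iteratedDeriv (n + 1) (fun z => z * g z) 0 = (n + 1) * iteratedDeriv n g 0 := by
  rw [iteratedDeriv_fun_mul contDiffAt_fun_id hg, Finset.sum_range_succ', Finset.sum_range_succ']
  simp [iteratedDeriv_fun_id_zero, iteratedDeriv_succ']

variable [CompleteSpace 𝕜]

theorem coeff_eq_iteratedDeriv_div_factorial [CharZero 𝕜] {f : 𝕜 → 𝕜} {a : ℕ → 𝕜} {r : ℝ}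
    (hr : 0 < r) (hrep : ∀ z ∈ ball (0 : 𝕜) r, HasSum (fun n => a n * z ^ n) (f z)) (n : ℕ) :
    a n = iteratedDeriv n f 0 / n.factorial := by
  have hp : HasFPowerSeriesAt f (FormalMultilinearSeries.ofScalars 𝕜 a) 0 := by
    rw [hasFPowerSeriesAt_iff]
    filter_upwards [ball_mem_nhds 0 hr] with z hz
    simpa [mul_comm] using hrep z hz
  simpa using congrArg (·.coeff n) (hp.eq_formalMultilinearSeries hp.analyticAt.hasFPowerSeriesAt)

theorem iteratedDeriv_two_comp {h w : 𝕜 → 𝕜} {x : 𝕜} (hh : AnalyticAt 𝕜 h (w x))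
    (hw : AnalyticAt 𝕜 w x) :
    iteratedDeriv 2 (h ∘ w) x =
      iteratedDeriv 2 h (w x) * deriv w x ^ 2 + deriv h (w x) * iteratedDeriv 2 w x := by
  have hderiv : deriv (h ∘ w) =ᶠ[𝓝 x] fun z => deriv h (w z) * deriv w z := by
    filter_upwards [hw.continuousAt.eventually hh.eventually_analyticAt,
      hw.eventually_analyticAt] with z hhz hwz
    exact deriv_comp z hhz.differentiableAt hwz.differentiableAt
  have hprod : HasDerivAt (fun z => deriv h (w z) * deriv w z)
      (deriv (deriv h) (w x) * deriv w x * deriv w x + deriv h (w x) * deriv (deriv w) x) x :=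
    (hh.deriv.differentiableAt.hasDerivAt.comp x hw.differentiableAt.hasDerivAt).mul
      hw.deriv.differentiableAt.hasDerivAt
  simp only [iteratedDeriv_two, hderiv.deriv_eq, hprod.deriv]
  ring

theorem two_mul_iteratedDeriv_three_of_mul_deriv_eq {f ψ : 𝕜 → 𝕜} (hf : AnalyticAt 𝕜 f 0)
    (hψ : AnalyticAt 𝕜 ψ 0) (hf0 : f 0 = 0) (hf1 : deriv f 0 = 1) (hψ0 : ψ 0 = 0)
    (heq : (fun z => z * deriv f z) =ᶠ[𝓝 0] fun z => f z * (1 + ψ z)) :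
    2 * iteratedDeriv 3 f 0 = 6 * deriv ψ 0 ^ 2 + 3 * iteratedDeriv 2 ψ 0 := by
  have hu : AnalyticAt 𝕜 (fun z => 1 + ψ z) 0 := analyticAt_const.add hψ
  have hleibniz : ∀ n : ℕ, (n + 1) * iteratedDeriv (n + 1) f 0 =
      ∑ i ∈ Finset.range (n + 2), ((n + 1).choose i : 𝕜) * iteratedDeriv i f 0 *
        iteratedDeriv (n + 1 - i) (fun z => 1 + ψ z) 0 := by
    intro n
    rw [← iteratedDeriv_fun_mul hf.contDiffAt hu.contDiffAt, ← heq.iteratedDeriv_eq,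
      iteratedDeriv_succ_id_mul_zero hf.deriv.contDiffAt, iteratedDeriv_succ']
  have h2 := hleibniz 1
  have h3 := hleibniz 2
  simp only [Nat.cast_one, Nat.reduceAdd, Finset.sum_range_succ, Finset.range_one,
    Finset.sum_singleton, Nat.choose_zero_right, iteratedDeriv_zero, hf0, mul_zero, tsub_zero,
    Order.lt_two_iff, zero_le, iteratedDeriv_const_add, zero_mul, Nat.choose_succ_self_right,
    Nat.cast_ofNat, iteratedDeriv_one, hf1, mul_one, Nat.add_one_sub_one, Order.lt_one_iff,
    zero_add, Nat.choose_self, one_mul, tsub_self, hψ0, add_zero, Nat.ofNat_pos,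
    Nat.choose_one_right, Nat.reduceSub] at h2 h3
  linear_combination h3 + 3 * deriv ψ 0 * h2

end Calculus

section Arcsinh

theorem carcsinh_eq_log_add_sqrt : carcsinh = fun ζ => log (ζ + sqrt (1 + ζ ^ 2)) := by
  ext ζ; simp [carcsinh, Complex.sqrt]

@[simp] theorem carcsinh_zero : carcsinh 0 = 0 := by simp [carcsinh_eq_log_add_sqrt]

theorem eventually_hasDerivAt_carcsinh :
    ∀ᶠ ζ in 𝓝 (0 : ℂ), HasDerivAt carcsinh (sqrt (1 + ζ ^ 2))⁻¹ ζ := by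
  have hrad : ∀ᶠ ζ in 𝓝 (0 : ℂ), 1 + ζ ^ 2 ∈ slitPlane :=
    (continuous_const.add (continuous_pow 2)).continuousAt.eventually_mem
      (isOpen_slitPlane.mem_nhds (by simp))
  have hlog : ∀ᶠ ζ in 𝓝 (0 : ℂ), ζ + sqrt (1 + ζ ^ 2) ∈ slitPlane := by
    have hc : ContinuousAt (fun ζ : ℂ => ζ + sqrt (1 + ζ ^ 2)) 0 :=
      continuousAt_id.add ((differentiableAt_sqrt (by simp)).continuousAt.comp
        (continuous_const.add (continuous_pow 2)).continuousAt)
    exact hc.eventually_mem (isOpen_slitPlane.mem_nhds (by simp))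
  filter_upwards [hrad, hlog] with ζ hrad hlog
  have hs : sqrt (1 + ζ ^ 2) ≠ 0 :=
    (cpow_ne_zero_iff_of_exponent_ne_zero (by norm_num)).2 (slitPlane_ne_zero hrad)
  have hsqrt : HasDerivAt (fun ζ => sqrt (1 + ζ ^ 2)) (ζ * (sqrt (1 + ζ ^ 2))⁻¹) ζ := by
    refine ((hasDerivAt_sqrt hrad).comp ζ ((hasDerivAt_pow 2 ζ).const_add 1)).congr_deriv ?_
    rw [show (-1 / 2 : ℂ) = -2⁻¹ by ring, cpow_neg]
    simp only [Nat.cast_ofNat, Nat.add_one_sub_one, pow_one, Complex.sqrt]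
    ring
  rw [carcsinh_eq_log_add_sqrt]
  refine (((hasDerivAt_id' ζ).add hsqrt).clog hlog).congr_deriv ?_
  field_simp [slitPlane_ne_zero hlog]
  exact add_comm (sqrt _) ζ

theorem analyticAt_carcsinh_zero : AnalyticAt ℂ carcsinh 0 :=
  analyticAt_iff_eventually_differentiableAt.2
    (eventually_hasDerivAt_carcsinh.mono fun _ h => h.differentiableAt)

theorem deriv_carcsinh_eventuallyEq :
    deriv carcsinh =ᶠ[𝓝 0] fun ζ => (sqrt (1 + ζ ^ 2))⁻¹ :=
  eventually_hasDerivAt_carcsinh.mono fun _ h => h.deriv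

@[simp] theorem deriv_carcsinh_zero : deriv carcsinh 0 = 1 := by
  simp [deriv_carcsinh_eventuallyEq.eq_of_nhds]

@[simp] theorem iteratedDeriv_two_carcsinh_zero : iteratedDeriv 2 carcsinh 0 = 0 := by
  have hsqrt : HasDerivAt (fun ζ : ℂ => sqrt (1 + ζ ^ 2)) 0 0 :=
    ((hasDerivAt_sqrt (by simp)).comp (0 : ℂ) ((hasDerivAt_pow 2 (0 : ℂ)).const_add 1)).congr_deriv
      (by simp)
  have hinv : HasDerivAt (fun ζ : ℂ => (sqrt (1 + ζ ^ 2))⁻¹) 0 0 :=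
    (hsqrt.inv (by simp)).congr_deriv (by simp)
  rw [iteratedDeriv_two, deriv_carcsinh_eventuallyEq.deriv_eq, hinv.deriv]

variable {w : ℂ → ℂ} {x : ℂ}

theorem analyticAt_carcsinh_comp (hw : AnalyticAt ℂ w x) (hw0 : w x = 0) :
    AnalyticAt ℂ (carcsinh ∘ w) x :=
  AnalyticAt.comp_of_eq analyticAt_carcsinh_zero hw hw0

theorem deriv_carcsinh_comp (hw : DifferentiableAt ℂ w x) (hw0 : w x = 0) :
    deriv (carcsinh ∘ w) x = deriv w x := by
  rw [deriv_comp x (hw0 ▸ analyticAt_carcsinh_zero.differentiableAt) hw, hw0,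
    deriv_carcsinh_zero, one_mul]

theorem iteratedDeriv_two_carcsinh_comp (hw : AnalyticAt ℂ w x) (hw0 : w x = 0) :
    iteratedDeriv 2 (carcsinh ∘ w) x = iteratedDeriv 2 w x := by
  rw [iteratedDeriv_two_comp (hw0 ▸ analyticAt_carcsinh_zero) hw, hw0,
    iteratedDeriv_two_carcsinh_zero, deriv_carcsinh_zero, zero_mul, zero_add, one_mul]

end Arcsinh

section SchwarzPick

theorem sq_norm_one_sub_conj_mul_sub_sq_norm_sub (a ζ : ℂ) :
    ‖1 - conj a * ζ‖ ^ 2 - ‖ζ - a‖ ^ 2 = (1 - ‖a‖ ^ 2) * (1 - ‖ζ‖ ^ 2) := by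
  simp only [Complex.sq_norm, normSq_apply, sub_re, sub_im, mul_re, mul_im, conj_re, conj_im,
    one_re, one_im]
  ring

variable {a ζ : ℂ}

theorem one_sub_conj_mul_ne_zero (ha : ‖a‖ < 1) (hζ : ‖ζ‖ ≤ 1) : 1 - conj a * ζ ≠ 0 := by
  refine sub_ne_zero.2 fun h => ?_
  have : ‖conj a * ζ‖ < 1 := by
    rw [norm_mul, norm_conj]
    nlinarith [norm_nonneg a, norm_nonneg ζ]
  simp [← h] at this

theorem norm_sub_div_one_sub_conj_mul_le_one (ha : ‖a‖ < 1) (hζ : ‖ζ‖ ≤ 1) :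
    ‖(ζ - a) / (1 - conj a * ζ)‖ ≤ 1 := by
  have hden := norm_pos_iff.2 (one_sub_conj_mul_ne_zero ha hζ)
  rw [norm_div, div_le_one hden, ← sq_le_sq₀ (norm_nonneg _) hden.le, ← sub_nonneg,
    sq_norm_one_sub_conj_mul_sub_sq_norm_sub]
  exact mul_nonneg (by nlinarith [norm_nonneg a]) (by nlinarith [norm_nonneg ζ])

theorem hasDerivAt_sub_div_one_sub_conj_mul (ha : ‖a‖ < 1) :
    HasDerivAt (fun ζ => (ζ - a) / (1 - conj a * ζ)) (1 - ‖a‖ ^ 2 : ℂ)⁻¹ a := by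
  have hden := one_sub_conj_mul_ne_zero ha ha.le
  have hd := ((hasDerivAt_id' a).sub_const a).div
    (((hasDerivAt_id' a).const_mul (conj a)).const_sub 1) hden
  refine hd.congr_deriv ?_
  rw [conj_mul'] at hden ⊢
  field_simp
  ring

theorem norm_deriv_le_one_sub_sq_of_mapsTo_ball {g : ℂ → ℂ}
    (hd : DifferentiableOn ℂ g (ball 0 1)) (hg : MapsTo g (ball 0 1) (closedBall 0 1)) :
    ‖deriv g 0‖ ≤ 1 - ‖g 0‖ ^ 2 := by
  have h0 : (0 : ℂ) ∈ ball 0 1 := mem_ball_self one_pos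
  have hg' : ∀ z ∈ ball (0 : ℂ) 1, ‖g z‖ ≤ 1 := fun z hz => mem_closedBall_zero_iff.1 (hg hz)
  rcases (hg' 0 h0).lt_or_eq with ha | ha
  · set a := g 0
    -- Schwarz's lemma applies to `g` followed by the disk automorphism sending `a` to `0`.
    have hschwarz : ‖deriv (fun z => (g z - a) / (1 - conj a * g z)) 0‖ ≤ 1 := by
      refine norm_deriv_le_one_of_mapsTo_ball ?_ (fun z hz => ?_) one_pos
      · exact (hd.sub_const a).div ((hd.const_mul _).const_sub 1)
          fun z hz => one_sub_conj_mul_ne_zero ha (hg' z hz)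
      · rw [show g 0 - a = 0 from sub_self a, zero_div, mem_closedBall_zero_iff]
        exact norm_sub_div_one_sub_conj_mul_le_one ha (hg' z hz)
    have hcomp : HasDerivAt (fun z => (g z - a) / (1 - conj a * g z))
        ((1 - ‖a‖ ^ 2 : ℂ)⁻¹ * deriv g 0) 0 :=
      (hasDerivAt_sub_div_one_sub_conj_mul ha).comp 0
        (hd.differentiableAt (ball_mem_nhds 0 one_pos)).hasDerivAt
    have hpos : 0 < 1 - ‖a‖ ^ 2 := by nlinarith [norm_nonneg a]
    rwa [hcomp.deriv, norm_mul, norm_inv, ← ofReal_pow, ← ofReal_one, ← ofReal_sub, norm_real,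
      Real.norm_of_nonneg hpos.le, inv_mul_le_iff₀ hpos, mul_one] at hschwarz
  · have hconst : EqOn g (fun _ => g 0) (ball 0 1) :=
      eqOn_of_isPreconnected_of_isMaxOn_norm (convex_ball 0 1).isPreconnected isOpen_ball hd h0
        fun z hz => (hg' z hz).trans ha.ge
    rw [(hconst.eventuallyEq_of_mem (ball_mem_nhds 0 one_pos)).deriv_eq, ha]
    simp

theorem norm_iteratedDeriv_two_le_of_mapsTo_ball {w : ℂ → ℂ}
    (hd : DifferentiableOn ℂ w (ball 0 1)) (hw : MapsTo w (ball 0 1) (closedBall 0 1))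
    (hw0 : w 0 = 0) : ‖iteratedDeriv 2 w 0‖ ≤ 2 * (1 - ‖deriv w 0‖ ^ 2) := by
  have hball : ball (0 : ℂ) 1 ∈ 𝓝 0 := ball_mem_nhds 0 one_pos
  set G := dslope w 0
  have hGd : DifferentiableOn ℂ G (ball 0 1) := (differentiableOn_dslope hball).2 hd
  have hG : MapsTo G (ball 0 1) (closedBall 0 1) := fun z hz => by
    simpa using norm_dslope_le_div_of_mapsTo_ball hd (by rwa [hw0]) hz
  have hwG : w = fun z => z * G z :=
    funext fun z => by simpa [hw0] using (sub_smul_dslope w 0 z).symm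
  have hGc := (hGd.analyticAt hball).contDiffAt (n := 2)
  have h1 : deriv w 0 = G 0 := by
    simpa [hwG] using iteratedDeriv_succ_id_mul_zero (n := 0) (hGc.of_le (by norm_num))
  have h2 : iteratedDeriv 2 w 0 = 2 * deriv G 0 := by
    rw [hwG, iteratedDeriv_succ_id_mul_zero (n := 1) hGc]
    norm_num
  rw [h1, h2, norm_mul, Complex.norm_two]
  linarith [norm_deriv_le_one_sub_sq_of_mapsTo_ball hGd hG]

end SchwarzPick

theorem abs_a3_le_half_general (f : ℂ → ℂ) (a : ℕ → ℂ) (hf : InStarRho f)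
    (hrep : ∀ z ∈ ball (0 : ℂ) 1, HasSum (fun n : ℕ => a n * z ^ n) (f z)) :
    ‖a 3‖ ≤ 1 / 2 := by
  obtain ⟨hfa, hf0, hf1, w, hwa, hw0, hwz, heq⟩ := hf
  have hball : ball (0 : ℂ) 1 ∈ 𝓝 0 := ball_mem_nhds 0 one_pos
  have hw : AnalyticAt ℂ w 0 := hwa 0 (mem_of_mem_nhds hball)
  have hcoeff := two_mul_iteratedDeriv_three_of_mul_deriv_eq (hfa 0 (mem_of_mem_nhds hball))
    (analyticAt_carcsinh_comp hw hw0) hf0 hf1 (by simp [hw0]) (eventually_of_mem hball heq)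
  rw [deriv_carcsinh_comp hw.differentiableAt hw0, iteratedDeriv_two_carcsinh_comp hw hw0]
    at hcoeff
  have hschwarz := norm_iteratedDeriv_two_le_of_mapsTo_ball
    (fun z hz => (hwa z hz).differentiableWithinAt)
    (fun z hz => mem_closedBall_zero_iff.2 ((hwz z hz).trans (mem_ball_zero_iff.1 hz).le)) hw0
  calc ‖a 3‖ = ‖deriv w 0 ^ 2 / 2 + iteratedDeriv 2 w 0 / 4‖ := by
        rw [coeff_eq_iteratedDeriv_div_factorial one_pos hrep 3]
        congr 1
        simp only [Nat.factorial]
        linear_combination hcoeff / 12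
    _ ≤ ‖deriv w 0‖ ^ 2 / 2 + ‖iteratedDeriv 2 w 0‖ / 4 := by
        refine (norm_add_le _ _).trans_eq ?_
        rw [norm_div, norm_div, norm_pow]
        norm_num
    _ ≤ 1 / 2 := by linarith

theorem abs_a3_le_half (f : ℂ → ℂ) (a : ℕ → ℂ) (hf : InStarRho f)
    (ha0 : a 0 = 0) (ha1 : a 1 = 1)
    (hrep : ∀ z ∈ ball (0 : ℂ) 1, HasSum (fun n : ℕ => a n * z ^ n) (f z)) :
    ‖a 3‖ ≤ 1 / 2 :=
  abs_a3_le_half_general f a hf hrep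
end

section
/- If p is in the Carathéodory class P with Taylor expansion p(z) = 1 + Σ_{n≥1} p_n z^n, then |p_1⁴ − 3 p_1² p_2 + p_2² + 2 p_1 p_3 − p_4| ≤ 2. -/
open Metric

/-- `p` belongs to the Carathéodory class: `p` is analytic on the unit disk,
`p 0 = 1`, and `Re (p z) > 0` on the unit disk. -/
def InCaratheodory (p : ℂ → ℂ) : Prop :=
  AnalyticOnNhd ℂ p (ball (0 : ℂ) 1) ∧ p 0 = 1 ∧
    ∀ z ∈ ball (0 : ℂ) 1, 0 < (p z).re

/-!
The quartic expression is the fourth Taylor coefficient of `1 / p`: inverting `p = 1 + Σ pₙ zⁿ`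
up to order four gives it. As `Re (1 / w) = Re w / |w|²`, the function `1 / p` is again in the
Carathéodory class, so it suffices to prove Carathéodory's bound `|aₙ| ≤ 2` for `n ≥ 1`.
On the circle `|z| = r < 1` we have `z⁻¹ = conj z / r²`, so conjugating the mean value identity
`avg (zⁿ f) = 0` gives `avg (z⁻ⁿ conj f) = 0`; adding this to the Cauchy formula
`aₙ = avg (z⁻ⁿ f)` gives `aₙ = avg (z⁻ⁿ · 2 Re f)`. Hence `|aₙ| rⁿ ≤ 2 avg (Re f) = 2 Re f(0) = 2`, and we let `r → 1`.
-/

open Complex ComplexConjugate FormalMultilinearSeries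

section PowerSeries

variable {f g : ℂ → ℂ} {a b : ℕ → ℂ} {R : ℝ}

theorem hasFPowerSeriesOnBall_ofScalars_of_hasSum (hR : 0 < R)
    (ha : ∀ z ∈ ball (0 : ℂ) R, HasSum (fun n => a n * z ^ n) (f z)) :
    HasFPowerSeriesOnBall f (ofScalars ℂ a) 0 (ENNReal.ofReal R) where
  r_le := by
    refine ENNReal.le_of_forall_nnreal_lt fun t ht =>
      (ofScalars ℂ a).le_radius_of_tendsto (l := 0) ?_
    have ht' : (t : ℂ) ∈ ball (0 : ℂ) R := by
      simpa using (ENNReal.lt_ofReal_iff_toReal_lt ENNReal.coe_ne_top).1 ht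
    simpa [ofScalars_norm] using (ha _ ht').summable.tendsto_atTop_zero.norm
  r_pos := ENNReal.ofReal_pos.2 hR
  hasSum {z} hz := by
    simpa [ofScalars_apply_eq, mul_comm] using ha z (by simpa using hz)

theorem summable_norm_mul_pow_of_hasSum (hR : 0 < R)
    (ha : ∀ z ∈ ball (0 : ℂ) R, HasSum (fun n => a n * z ^ n) (f z)) {z : ℂ}
    (hz : z ∈ ball (0 : ℂ) R) : Summable fun n => ‖a n * z ^ n‖ := by
  have hz' : z ∈ eball (0 : ℂ) (ofScalars ℂ a).radius :=
    eball_subset_eball (hasFPowerSeriesOnBall_ofScalars_of_hasSum hR ha).r_le (by simpa using hz)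
  simpa [ofScalars_apply_eq, mul_comm] using (ofScalars ℂ a).summable_norm_apply hz'

theorem hasSum_mul_of_hasSum (hR : 0 < R)
    (ha : ∀ z ∈ ball (0 : ℂ) R, HasSum (fun n => a n * z ^ n) (f z))
    (hb : ∀ z ∈ ball (0 : ℂ) R, HasSum (fun n => b n * z ^ n) (g z)) :
    ∀ z ∈ ball (0 : ℂ) R,
      HasSum (fun n => (∑ k ∈ Finset.range (n + 1), a k * b (n - k)) * z ^ n) (f z * g z) := by
  intro z hz
  have h := hasSum_sum_range_mul_of_summable_norm (summable_norm_mul_pow_of_hasSum hR ha hz)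
    (summable_norm_mul_pow_of_hasSum hR hb hz)
  rw [(ha z hz).tsum_eq, (hb z hz).tsum_eq] at h
  refine h.congr_fun fun n => ?_
  rw [Finset.sum_mul]
  refine Finset.sum_congr rfl fun k hk => ?_
  obtain ⟨m, rfl⟩ := Nat.exists_eq_add_of_le (Finset.mem_range_succ_iff.1 hk)
  rw [Nat.add_sub_cancel_left, pow_add]
  ring

theorem differentiableOn_ball_of_hasSum (hR : 0 < R)
    (ha : ∀ z ∈ ball (0 : ℂ) R, HasSum (fun n => a n * z ^ n) (f z)) :
    DifferentiableOn ℂ f (ball 0 R) :=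
  (hasFPowerSeriesOnBall_ofScalars_of_hasSum hR ha).differentiableOn.mono (by simp)

theorem eq_of_hasSum_of_hasSum (hR : 0 < R)
    (ha : ∀ z ∈ ball (0 : ℂ) R, HasSum (fun n => a n * z ^ n) (f z))
    (hb : ∀ z ∈ ball (0 : ℂ) R, HasSum (fun n => b n * z ^ n) (f z)) : a = b :=
  (ofScalars_series_eq_iff ℂ a b).1 <|
    (hasFPowerSeriesOnBall_ofScalars_of_hasSum hR ha).hasFPowerSeriesAt.eq_formalMultilinearSeries
      (hasFPowerSeriesOnBall_ofScalars_of_hasSum hR hb).hasFPowerSeriesAt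

theorem exists_hasSum_of_differentiableOn
    (hf : DifferentiableOn ℂ f (ball 0 R)) :
    ∃ a : ℕ → ℂ, ∀ z ∈ ball (0 : ℂ) R, HasSum (fun n => a n * z ^ n) (f z) :=
  ⟨fun n => (n.factorial : ℂ)⁻¹ * iteratedDeriv n f 0, fun z hz => by
    simpa [smul_eq_mul, mul_assoc, mul_comm, mul_left_comm] using
      Complex.hasSum_taylorSeries_on_ball hf hz⟩

theorem sum_range_mul_eq_ite_of_hasSum_inv {c d : ℕ → ℂ} (hR : 0 < R)
    (hc : ∀ z ∈ ball (0 : ℂ) R, HasSum (fun n => c n * z ^ n) (f z))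
    (hd : ∀ z ∈ ball (0 : ℂ) R, HasSum (fun n => d n * z ^ n) (f z)⁻¹)
    (hf : ∀ z ∈ ball (0 : ℂ) R, f z ≠ 0) (n : ℕ) :
    ∑ k ∈ Finset.range (n + 1), c k * d (n - k) = if n = 0 then 1 else 0 := by
  have hprod : ∀ z ∈ ball (0 : ℂ) R,
      HasSum (fun n => (∑ k ∈ Finset.range (n + 1), c k * d (n - k)) * z ^ n) 1 := fun z hz => by
    simpa only [mul_inv_cancel₀ (hf z hz)] using hasSum_mul_of_hasSum hR hc hd z hz
  have hone : ∀ z ∈ ball (0 : ℂ) R,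
      HasSum (fun n => (if n = 0 then 1 else 0) * z ^ n) (1 : ℂ) := fun z _ => by
    convert hasSum_ite_eq 0 (1 : ℂ) using 2 with n
    split_ifs with h <;> simp [h]
  exact congrFun (eq_of_hasSum_of_hasSum hR hprod hone) n

end PowerSeries

section CircleAverage

open Real

variable {f : ℂ → ℂ} {a : ℕ → ℂ} {R r : ℝ} {n : ℕ}

theorem circleAverage_conj {g : ℂ → ℂ} {c : ℂ} (hg : CircleIntegrable g c r) :
    circleAverage (fun z => conj (g z)) c r = conj (circleAverage g c r) :=
  conjCLE.toContinuousLinearMap.circleAverage_comp_comm hg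

theorem circleAverage_pow_mul_eq_zero (hf : DifferentiableOn ℂ f (closedBall 0 |r|))
    (hn : n ≠ 0) : circleAverage (fun z => z ^ n * f z) 0 r = 0 := by
  simpa [hn] using (((differentiableOn_pow n).fun_mul hf).mono
    closure_ball_subset_closedBall).diffContOnCl.circleAverage

theorem circleAverage_inv_pow_mul_eq_coeff (hR : 0 < R)
    (ha : ∀ z ∈ ball (0 : ℂ) R, HasSum (fun n => a n * z ^ n) (f z)) (hr : 0 < r) (hrR : r < R)
    (n : ℕ) : circleAverage (fun z => z⁻¹ ^ n * f z) 0 r = a n := by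
  have hdiff : DifferentiableOn ℂ f (closedBall 0 r) :=
    (differentiableOn_ball_of_hasSum hR ha).mono (closedBall_subset_ball hrR)
  lift r to NNReal using hr.le
  have hseries : ofScalars ℂ a = cauchyPowerSeries f 0 r :=
    (hasFPowerSeriesOnBall_ofScalars_of_hasSum hR ha).hasFPowerSeriesAt.eq_formalMultilinearSeries
      (hdiff.hasFPowerSeriesOnBall (mod_cast hr)).hasFPowerSeriesAt
  rw [← coeff_ofScalars (p := a), hseries, circleAverage_eq_circleIntegral hr.ne']
  simp [coeff, cauchyPowerSeries, smul_eq_mul, mul_left_comm]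

theorem coeff_eq_circleAverage_re (hR : 0 < R)
    (ha : ∀ z ∈ ball (0 : ℂ) R, HasSum (fun n => a n * z ^ n) (f z)) (hr : 0 < r) (hrR : r < R)
    (hn : n ≠ 0) : a n = circleAverage (fun z => z⁻¹ ^ n * ((2 * (f z).re : ℝ) : ℂ)) 0 r := by
  have hdiff : DifferentiableOn ℂ f (closedBall 0 |r|) :=
    (differentiableOn_ball_of_hasSum hR ha).mono (closedBall_subset_ball (by rwa [abs_of_pos hr]))
  have hcont : ContinuousOn f (sphere 0 |r|) := hdiff.continuousOn.mono sphere_subset_closedBall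
  have hne : ∀ z ∈ sphere (0 : ℂ) |r|, z ≠ 0 := fun z hz =>
    ne_zero_of_mem_sphere (by positivity) ⟨z, hz⟩
  have hsphere : Set.EqOn (fun z => z⁻¹ ^ n * ((2 * (f z).re : ℝ) : ℂ))
      (fun z => z⁻¹ ^ n * f z + ((r : ℂ) ^ 2)⁻¹ ^ n • conj (z ^ n * f z)) (sphere 0 |r|) := by
    intro z hz
    have hr0 : (r : ℂ) ≠ 0 := mod_cast hr.ne'
    have hconj : conj z = (r : ℂ) ^ 2 * z⁻¹ := by
      rw [eq_mul_inv_iff_mul_eq₀ (hne z hz), mul_comm, mul_conj, normSq_eq_norm_sq,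
        mem_sphere_zero_iff_norm.1 hz, abs_of_pos hr]
      push_cast; ring
    have hre : ((2 * (f z).re : ℝ) : ℂ) = f z + conj (f z) := (add_conj _).symm
    have hpow : ((r : ℂ) ^ 2)⁻¹ ^ n * ((r : ℂ) ^ 2 * z⁻¹) ^ n = z⁻¹ ^ n := by
      rw [← mul_pow, inv_mul_cancel_left₀ (pow_ne_zero 2 hr0)]
    simp only [hre, smul_eq_mul, map_mul, map_pow, hconj]
    rw [← mul_assoc, hpow]
    ring
  have hint₁ : CircleIntegrable (fun z => z⁻¹ ^ n * f z) 0 r :=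
    ContinuousOn.circleIntegrable' (by fun_prop (disch := assumption))
  have hint₂ : CircleIntegrable (fun z => z ^ n * f z) 0 r :=
    ContinuousOn.circleIntegrable' (by fun_prop)
  have hint₃ : CircleIntegrable (fun z => ((r : ℂ) ^ 2)⁻¹ ^ n • conj (z ^ n * f z)) 0 r :=
    ContinuousOn.circleIntegrable' (by fun_prop)
  rw [circleAverage_congr_sphere hsphere, circleAverage_fun_add hint₁ hint₃, circleAverage_fun_smul,
    circleAverage_conj hint₂, circleAverage_pow_mul_eq_zero hdiff hn, map_zero, smul_zero, add_zero,
    circleAverage_inv_pow_mul_eq_coeff hR ha hr hrR]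

theorem norm_circleAverage_le {E : Type*} [NormedAddCommGroup E] [NormedSpace ℝ E] (g : ℂ → E)
    (c : ℂ) (r : ℝ) : ‖circleAverage g c r‖ ≤ circleAverage (fun z => ‖g z‖) c r := by
  rw [circleAverage_def, circleAverage_def, norm_smul, Real.norm_of_nonneg (by positivity),
    smul_eq_mul]
  gcongr
  exact intervalIntegral.norm_integral_le_integral_norm (by positivity)

theorem norm_coeff_mul_pow_le_of_lt (hR : 0 < R)
    (ha : ∀ z ∈ ball (0 : ℂ) R, HasSum (fun n => a n * z ^ n) (f z))
    (hre : ∀ z ∈ ball (0 : ℂ) R, 0 ≤ (f z).re) (hr : 0 < r) (hrR : r < R) (hn : n ≠ 0) :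
    ‖a n‖ * r ^ n ≤ 2 * (f 0).re := by
  have hdiff : DifferentiableOn ℂ f (closedBall 0 |r|) :=
    (differentiableOn_ball_of_hasSum hR ha).mono (closedBall_subset_ball (by rwa [abs_of_pos hr]))
  have hsphere : Set.EqOn (fun z => ‖z⁻¹ ^ n * ((2 * (f z).re : ℝ) : ℂ)‖)
      (fun z => (2 * (r ^ n)⁻¹) • (f z).re) (sphere 0 |r|) := by
    intro z hz
    have hzr : ‖z‖ = r := by rw [mem_sphere_zero_iff_norm.1 hz, abs_of_pos hr]
    have hzR : z ∈ ball (0 : ℂ) R := mem_ball_zero_iff.2 (hzr ▸ hrR)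
    simp [hzr, abs_of_nonneg (hre z hzR)]
    ring
  have hmean : circleAverage (fun z => (f z).re) 0 r = (f 0).re := by
    have hint : CircleIntegrable f 0 r := ContinuousOn.circleIntegrable'
      (hdiff.continuousOn.mono sphere_subset_closedBall)
    rw [← (hdiff.mono closure_ball_subset_closedBall).diffContOnCl.circleAverage]
    exact reCLM.circleAverage_comp_comm hint
  calc ‖a n‖ * r ^ n
      ≤ circleAverage (fun z => ‖z⁻¹ ^ n * ((2 * (f z).re : ℝ) : ℂ)‖) 0 r * r ^ n := by
        rw [coeff_eq_circleAverage_re hR ha hr hrR hn]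
        gcongr
        exact norm_circleAverage_le _ _ _
    _ = 2 * (f 0).re := by
        rw [circleAverage_congr_sphere hsphere, circleAverage_fun_smul, hmean, smul_eq_mul]
        field_simp

theorem norm_coeff_mul_pow_le (hR : 0 < R)
    (ha : ∀ z ∈ ball (0 : ℂ) R, HasSum (fun n => a n * z ^ n) (f z))
    (hre : ∀ z ∈ ball (0 : ℂ) R, 0 ≤ (f z).re) (hn : n ≠ 0) :
    ‖a n‖ * R ^ n ≤ 2 * (f 0).re := by
  have hlim : Filter.Tendsto (fun r => ‖a n‖ * r ^ n) (nhdsWithin R (Set.Iio R))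
      (nhds (‖a n‖ * R ^ n)) :=
    ((continuous_const.mul (continuous_pow n)).tendsto R).mono_left nhdsWithin_le_nhds
  refine le_of_tendsto hlim ?_
  filter_upwards [Ioo_mem_nhdsLT hR] with r hr
  exact norm_coeff_mul_pow_le_of_lt hR ha hre hr.1 hr.2 hn

end CircleAverage

theorem coeff_four_of_sum_mul_eq {c d : ℕ → ℂ} (hc0 : c 0 = 1)
    (h : ∀ n, ∑ k ∈ Finset.range (n + 1), c k * d (n - k) = if n = 0 then 1 else 0) :
    d 4 = c 1 ^ 4 - 3 * c 1 ^ 2 * c 2 + c 2 ^ 2 + 2 * c 1 * c 3 - c 4 := by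
  have h0 : d 0 = 1 := by simpa [hc0] using h 0
  have h1 := h 1
  have h2 := h 2
  have h3 := h 3
  have h4 := h 4
  simp [Finset.sum_range_succ, hc0, h0] at h1 h2 h3 h4
  linear_combination (-(c 1 ^ 3 - 2 * c 1 * c 2 + c 3)) * h1 - (c 2 - c 1 ^ 2) * h2 - c 1 * h3 + h4

namespace InCaratheodory

variable {p : ℂ → ℂ}

theorem ne_zero (hp : InCaratheodory p) : ∀ z ∈ ball (0 : ℂ) 1, p z ≠ 0 :=
  fun z hz h => by simpa [h] using hp.2.2 z hz

theorem inv (hp : InCaratheodory p) : InCaratheodory fun z => (p z)⁻¹ :=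
  ⟨hp.1.inv hp.ne_zero, by simp [hp.2.1], fun z hz => by
    simpa [inv_re] using div_pos (hp.2.2 z hz) (normSq_pos.2 (hp.ne_zero z hz))⟩

theorem norm_coeff_le_two {a : ℕ → ℂ} (hp : InCaratheodory p)
    (ha : ∀ z ∈ ball (0 : ℂ) 1, HasSum (fun n => a n * z ^ n) (p z)) {n : ℕ} (hn : n ≠ 0) :
    ‖a n‖ ≤ 2 := by
  simpa [hp.2.1] using norm_coeff_mul_pow_le one_pos ha (fun z hz => (hp.2.2 z hz).le) hn

end InCaratheodory

theorem cara_quartic_bound (p : ℂ → ℂ) (c : ℕ → ℂ) (hp : InCaratheodory p)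
    (hc0 : c 0 = 1)
    (hrep : ∀ z ∈ ball (0 : ℂ) 1, HasSum (fun n : ℕ => c n * z ^ n) (p z)) :
    ‖c 1 ^ 4 - 3 * c 1 ^ 2 * c 2 + c 2 ^ 2 + 2 * c 1 * c 3 - c 4‖ ≤ 2 := by
  obtain ⟨d, hd⟩ := exists_hasSum_of_differentiableOn hp.inv.1.differentiableOn
  rw [← coeff_four_of_sum_mul_eq hc0
    (sum_range_mul_eq_ite_of_hasSum_inv one_pos hrep hd hp.ne_zero)]
  exact hp.inv.norm_coeff_le_two hd four_ne_zero
end
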